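/- arXiv:1903.11434 — 3 statements merged into one kernel-verified Lean document; each statement's English description precedes it below -/
import Mathlib

section
/- In a block tree, if a proposer P decides for a block A (having received precommits of weight > τ_P for A with τ_P > 1/3) and decides for a block B with the same property, and the protocol guarantees no honest proposer prevotes for two distinct blocks of the same height, and the Byzantine weight is < τ − 1/3 with τ ≤ min(τ_A, τ_B), then h(A) = h(B) implies A = B. -/
lemma stmt_4_honest_mem {α : Type*} [DecidableEq α]
    (proposers honest U : Finset α) (ω : α → ℝ)
    (hnn : ∀ p ∈ proposers, 0 ≤ ω p) (hU : U ⊆ proposers)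
    (hgt : ∑ p ∈ proposers \ honest, ω p < ∑ p ∈ U, ω p) :
    ∃ p ∈ U, p ∈ honest := by
  by_contra hc
  push_neg at hc
  have hsub : U ⊆ proposers \ honest := fun p hp =>
    Finset.mem_sdiff.mpr ⟨hU hp, hc p hp⟩
  have := Finset.sum_le_sum_of_subset_of_nonneg hsub
    (fun p hp _ => hnn p (Finset.mem_sdiff.mp hp).1)
  linarith

lemma stmt_4_inter {α : Type*} [DecidableEq α]
    (proposers S T : Finset α) (ω : α → ℝ)
    (hnn : ∀ p ∈ proposers, 0 ≤ ω p)
    (hsum : ∑ p ∈ proposers, ω p = 1)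
    (hS : S ⊆ proposers) (hT : T ⊆ proposers) :
    ∑ p ∈ S, ω p + ∑ p ∈ T, ω p - 1 ≤ ∑ p ∈ S ∩ T, ω p := by
  have h1 : ∑ p ∈ S ∪ T, ω p + ∑ p ∈ S ∩ T, ω p
      = ∑ p ∈ S, ω p + ∑ p ∈ T, ω p := Finset.sum_union_inter
  have h2 : ∑ p ∈ S ∪ T, ω p ≤ ∑ p ∈ proposers, ω p :=
    Finset.sum_le_sum_of_subset_of_nonneg (Finset.union_subset hS hT)
      (fun p hp _ => hnn p hp)
  linarith


/-- Two decided blocks at the same height are equal: if A and B each received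
precommit quorums of weight > τ_A resp. > τ_B with τ ≤ min(τ_A, τ_B), the
Byzantine weight is < τ - 1/3, honest proposers prevote at most once per
height (rule I) and precommit only after a prevote with a > 2/3 prevote
quorum (rule II), then h(A) = h(B) implies A = B. -/
theorem stmt_4 {α V : Type*} [DecidableEq α] (proposers honest : Finset α)
    (ω : α → ℝ) (hpos : ∀ p ∈ proposers, 0 < ω p)
    (hsum : ∑ p ∈ proposers, ω p = 1) (hhon : honest ⊆ proposers)
    (h : V → ℕ) (prevote precommit : α → V → Prop)
    (τ τA τB : ℝ) (hτ : 1/3 < τ) (hτ1 : τ ≤ 1) (hτA : τ ≤ τA) (hτB : τ ≤ τB)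
    (hByz : ∑ p ∈ proposers \ honest, ω p < τ - 1/3)
    (ruleI : ∀ p ∈ honest, ∀ b b' : V, prevote p b → prevote p b' →
      h b = h b' → b = b')
    (ruleII : ∀ p ∈ honest, ∀ b : V, precommit p b → prevote p b ∧
      ∃ Q ⊆ proposers, (∀ q ∈ Q, prevote q b) ∧ 2/3 < ∑ q ∈ Q, ω q)
    (A B : V)
    (hdecA : ∃ Q ⊆ proposers, (∀ q ∈ Q, precommit q A) ∧ τA < ∑ q ∈ Q, ω q)
    (hdecB : ∃ Q ⊆ proposers, (∀ q ∈ Q, precommit q B) ∧ τB < ∑ q ∈ Q, ω q)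
    (hh : h A = h B) : A = B := by
  have hnn : ∀ p ∈ proposers, 0 ≤ ω p := fun p hp => (hpos p hp).le
  obtain ⟨QA, hQA, hpreA, hwA⟩ := hdecA
  obtain ⟨QB, hQB, hpreB, hwB⟩ := hdecB
  by_cases hτ23 : τ ≤ 2/3
  · -- find honest precommitter in QA and QB
    obtain ⟨pA, hpAQ, hpAh⟩ := stmt_4_honest_mem proposers honest QA ω hnn hQA
      (by linarith)
    obtain ⟨pB, hpBQ, hpBh⟩ := stmt_4_honest_mem proposers honest QB ω hnn hQB
      (by linarith)
    obtain ⟨-, S, hS, hSv, hSw⟩ := ruleII pA hpAh A (hpreA pA hpAQ)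
    obtain ⟨-, T, hT, hTv, hTw⟩ := ruleII pB hpBh B (hpreB pB hpBQ)
    have hint := stmt_4_inter proposers S T ω hnn hsum hS hT
    obtain ⟨p, hpST, hph⟩ := stmt_4_honest_mem proposers honest (S ∩ T) ω hnn
      (fun p hp => hS (Finset.mem_inter.mp hp).1) (by linarith)
    obtain ⟨hpS, hpT⟩ := Finset.mem_inter.mp hpST
    exact ruleI p hph A B (hSv p hpS) (hTv p hpT) hh
  · push_neg at hτ23
    have hint := stmt_4_inter proposers QA QB ω hnn hsum hQA hQB
    obtain ⟨p, hpQ, hph⟩ := stmt_4_honest_mem proposers honest (QA ∩ QB) ω hnn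
      (fun p hp => hQA (Finset.mem_inter.mp hp).1) (by linarith)
    obtain ⟨hpA, hpB⟩ := Finset.mem_inter.mp hpQ
    obtain ⟨hvA, -⟩ := ruleII p hph A (hpreA p hpA)
    obtain ⟨hvB, -⟩ := ruleII p hph B (hpreB p hpB)
    exact ruleI p hph A B hvA hvB hh
end

section
/- If fewer than 1/3 (by weight) of the proposers are Byzantine and all honest proposers obey rule (I) (at most one prevote per height), then for every height there is at most one block at that height with prevotes of total weight > 2/3. -/
/-- If the Byzantine weight is < 1/3 and honest proposers prevote at most once
per height, then at every height at most one block has prevotes of weight > 2/3. -/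
theorem stmt_6 {α V : Type*} [DecidableEq α] (proposers honest : Finset α)
    (ω : α → ℝ) (hpos : ∀ p ∈ proposers, 0 < ω p)
    (hsum : ∑ p ∈ proposers, ω p = 1) (hhon : honest ⊆ proposers)
    (hByz : ∑ p ∈ proposers \ honest, ω p < 1/3)
    (h : V → ℕ) (prevote : α → V → Prop)
    (ruleI : ∀ p ∈ honest, ∀ b b' : V, prevote p b → prevote p b' →
      h b = h b' → b = b')
    (A B : V) (hh : h A = h B)
    (hQA : ∃ Q ⊆ proposers, (∀ q ∈ Q, prevote q A) ∧ 2/3 < ∑ q ∈ Q, ω q)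
    (hQB : ∃ Q ⊆ proposers, (∀ q ∈ Q, prevote q B) ∧ 2/3 < ∑ q ∈ Q, ω q) :
    A = B := by
  by_contra hne
  obtain ⟨QA, hQAsub, hQAv, hQAw⟩ := hQA
  obtain ⟨QB, hQBsub, hQBv, hQBw⟩ := hQB
  have hnonneg : ∀ p ∈ proposers, 0 ≤ ω p := fun p hp => (hpos p hp).le
  -- QA ∩ QB ⊆ proposers \ honest
  have hsub : QA ∩ QB ⊆ proposers \ honest := by
    intro p hp
    simp only [Finset.mem_inter] at hp
    rw [Finset.mem_sdiff]
    refine ⟨hQAsub hp.1, fun hph => hne ?_⟩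
    exact ruleI p hph A B (hQAv p hp.1) (hQBv p hp.2) hh
  have hinter : ∑ p ∈ QA ∩ QB, ω p < 1/3 :=
    lt_of_le_of_lt (Finset.sum_le_sum_of_subset_of_nonneg hsub
      (fun p hp _ => hnonneg p (Finset.mem_sdiff.mp hp).1)) hByz
  have hunion : ∑ p ∈ QA ∪ QB, ω p ≤ 1 := by
    rw [← hsum]
    exact Finset.sum_le_sum_of_subset_of_nonneg (Finset.union_subset hQAsub hQBsub)
      (fun p hp _ => hnonneg p hp)
  have key : ∑ p ∈ QA ∪ QB, ω p + ∑ p ∈ QA ∩ QB, ω p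
      = ∑ p ∈ QA, ω p + ∑ p ∈ QB, ω p := Finset.sum_union_inter
  linarith
end

section
/- If blocks T and T' are proposed by the same honest delegate with T before T', then every prevote implied by T is for a block of height ≤ h(T), every prevote implied by T' is for a block of height > h_previous(T') ≥ h(T), and hence the heights of prevotes implied by distinct blocks of the same honest delegate are pairwise distinct (rule (I) holds). -/
/-- If T is proposed before T' by the same honest delegate, so that
h(T) ≤ h_previous(T'), and each block B implies prevotes only at heights in
(h_previous(B), h(B)], then all prevotes implied by T are at heights ≤ h(T),
all prevotes implied by T' are at heights > h_previous(T') ≥ h(T), and the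
implied prevote heights of the two blocks are disjoint (rule (I)). -/
theorem stmt_15 {Block : Type*} (hprev hgt : Block → ℕ)
    (implied : Block → Finset ℕ)
    (himp : ∀ B : Block, implied B ⊆ Finset.Ioc (hprev B) (hgt B))
    (T T' : Block) (horder : hgt T ≤ hprev T') :
    (∀ x ∈ implied T, x ≤ hgt T) ∧
    (∀ x ∈ implied T', hprev T' < x ∧ hgt T < x) ∧
    Disjoint (implied T) (implied T') := by
  refine ⟨fun x hx => (Finset.mem_Ioc.1 (himp T hx)).2,
    fun x hx => ?_, ?_⟩
  · have h := Finset.mem_Ioc.1 (himp T' hx)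
    exact ⟨h.1, lt_of_le_of_lt horder h.1⟩
  · refine Finset.disjoint_left.2 fun x hxT hxT' => ?_
    have h1 := (Finset.mem_Ioc.1 (himp T hxT)).2
    have h2 := (Finset.mem_Ioc.1 (himp T' hxT')).1
    omega
end
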